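/- Let f be ℒ×ℬ-measurable and satisfy |f(t,x₁,u₁) − f(t,x₂,u₂)| ≤ k_x|x₁−x₂| + k_u|u₁−u₂| for a.e. t ∈ [a,b], all x₁,x₂ ∈ ℝⁿ and u₁,u₂ ∈ U(t); let U have ℒ×ℬ-measurable graph, closed values, and |u| ≤ c for all u ∈ U(t), a.e. t; and let C ⊆ ℝⁿ × ℝⁿ be closed. Then d_V((x,u,e),(x',u',e')) := |x(a) − x'(a)| + |e − e'| + ∫_a^b |u(t) − u'(t)| dt defines a metric on V (controls being identified when equal a.e.), and (V, d_V) is a complete metric space. -/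

import Mathlib

open MeasureTheory Set Filter

noncomputable section

/-- Shorthand for Euclidean space `ℝⁿ`. -/
abbrev Vec (n : ℕ) := EuclideanSpace ℝ (Fin n)

/-- Membership in the set `V`: `(x,u)` is a process of the control system (`x` absolutely
continuous, encoded via an integrable derivative and the integral representation, with
`ẋ(t) = f(t,x(t),u(t))` a.e. and `u(t) ∈ U(t)` a.e.), `e ∈ ℝⁿ`, `(x(a), e) ∈ C`, and
`‖x - x*‖_∞ ≤ ε` on `[a,b]`. -/
def InV {n k : ℕ} (a b : ℝ) (f : ℝ → Vec n → Vec k → Vec n) (U : ℝ → Set (Vec k))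
    (C : Set (Vec n × Vec n)) (xstar : ℝ → Vec n) (ε : ℝ)
    (x : ℝ → Vec n) (u : ℝ → Vec k) (e : Vec n) : Prop :=
  AEStronglyMeasurable u (volume.restrict (Icc a b)) ∧
  (∀ᵐ t ∂(volume.restrict (Icc a b)), u t ∈ U t) ∧
  (∃ x' : ℝ → Vec n, IntegrableOn x' (Icc a b) ∧
    (∀ t ∈ Icc a b, x t = x a + ∫ s in a..t, x' s) ∧
    (∀ᵐ t ∂(volume.restrict (Icc a b)), x' t = f t (x t) (u t))) ∧
  (x a, e) ∈ C ∧
  (∀ t ∈ Icc a b, ‖x t - xstar t‖ ≤ ε)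

/-- The metric `d_V` on `V`. -/
def dV {n k : ℕ} (a b : ℝ) (x : ℝ → Vec n) (u : ℝ → Vec k) (e : Vec n)
    (x₁ : ℝ → Vec n) (u₁ : ℝ → Vec k) (e₁ : Vec n) : ℝ :=
  ‖x a - x₁ a‖ + ‖e - e₁‖ + ∫ t in Icc a b, ‖u t - u₁ t‖

/-! The three summands of `dV` are a distance between initial points, a distance between
endpoints and the `L¹` distance between controls, so a `dV`-Cauchy sequence in `V` has a limit
`e` of the endpoints and an `L¹` limit `u` of the controls. Along the Lipschitz dynamics,
Grönwall's inequality bounds `sup ‖x - x₁‖` by a constant times `dV`; this gives separation,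
and it makes the trajectories converge to some `x`. The limit `(x, u, e)` lies in `V`: an
a.e. convergent subsequence of the controls keeps `u t` in the closed set `U t`, the Lipschitz
bound passes the integral equation `ẋ = f(t, x, u)` to the limit, and `C` and the tube around
`xstar` are closed. -/

open Topology

namespace MeasureTheory

theorem IntegrableOn.intervalIntegrable_of_mem_Icc {E : Type*} [NormedAddCommGroup E]
    {f : ℝ → E} {a b t : ℝ} (hf : IntegrableOn f (Icc a b)) (ht : t ∈ Icc a b) :
    IntervalIntegrable f volume a t :=
  (intervalIntegrable_iff_integrableOn_Icc_of_le ht.1).2 (hf.mono_set (Icc_subset_Icc_right ht.2))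

section L1

variable {α E : Type*} [MeasurableSpace α] {μ : Measure α} [NormedAddCommGroup E]

theorem Integrable.of_norm_sub_le {f g : α → E} {φ : α → ℝ} (hf : Integrable f μ)
    (hg : AEStronglyMeasurable g μ) (hφ : Integrable φ μ) (h : ∀ᵐ t ∂μ, ‖g t - f t‖ ≤ φ t) :
    Integrable g μ := by
  simpa using hf.add (hφ.mono' (hg.sub hf.aestronglyMeasurable) h)

theorem Integrable.dist_toL1 {f g : α → E} (hf : Integrable f μ) (hg : Integrable g μ) :
    dist (hf.toL1 f) (hg.toL1 g) = ∫ t, ‖f t - g t‖ ∂μ := by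
  rw [dist_eq_norm, ← Integrable.toL1_sub, L1.norm_of_fun_eq_integral_norm]
  rfl

theorem exists_integrable_tendsto_integral_norm_sub [CompleteSpace E] {u : ℕ → α → E}
    (hu : ∀ i, Integrable (u i) μ) (hcau : CauchySeq fun i => (hu i).toL1 (u i)) :
    ∃ v, Integrable v μ ∧ Tendsto (fun i => ∫ t, ‖u i t - v t‖ ∂μ) atTop (𝓝 0) := by
  obtain ⟨w, hw⟩ := cauchySeq_tendsto_of_complete hcau
  have hwi : Integrable w μ := L1.integrable_coeFn w
  refine ⟨w, hwi, (tendsto_iff_dist_tendsto_zero.1 hw).congr fun i => ?_⟩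
  simpa only [Integrable.toL1_coeFn] using Integrable.dist_toL1 (hu i) hwi

theorem ae_mem_of_tendsto_integral_norm_sub {S : α → Set E} (hS : ∀ t, IsClosed (S t))
    {u : ℕ → α → E} {v : α → E} (hu : ∀ i, Integrable (u i) μ) (hv : Integrable v μ)
    (hmem : ∀ i, ∀ᵐ t ∂μ, u i t ∈ S t)
    (hlim : Tendsto (fun i => ∫ t, ‖u i t - v t‖ ∂μ) atTop (𝓝 0)) :
    ∀ᵐ t ∂μ, v t ∈ S t := by
  have hLp : Tendsto (fun i => eLpNorm (u i - v) 1 μ) atTop (𝓝 0) := by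
    refine (ENNReal.ofReal_zero ▸ ENNReal.tendsto_ofReal hlim).congr fun i => ?_
    rw [eLpNorm_one_eq_lintegral_enorm, ← ofReal_integral_norm_eq_lintegral_enorm ((hu i).sub hv)]
    rfl
  obtain ⟨ns, -, hae⟩ := (tendstoInMeasure_of_tendsto_eLpNorm one_ne_zero
    (fun i => (hu i).aestronglyMeasurable) hv.aestronglyMeasurable hLp).exists_seq_tendsto_ae
  filter_upwards [ae_all_iff.2 fun j => hmem (ns j), hae] with t hmemt ht
  exact (hS t).mem_of_tendsto ht (.of_forall hmemt)

theorem tendsto_integral_norm_sub_of_tendsto_of_bound [IsFiniteMeasure μ] {x : ℕ → α → E}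
    {y : α → E} {B : ℝ} (hx : ∀ i, AEStronglyMeasurable (x i) μ)
    (hB : ∀ i, ∀ᵐ t ∂μ, ‖x i t - y t‖ ≤ B)
    (hlim : ∀ᵐ t ∂μ, Tendsto (fun i => x i t) atTop (𝓝 (y t))) :
    Tendsto (fun i => ∫ t, ‖x i t - y t‖ ∂μ) atTop (𝓝 0) := by
  have hy : AEStronglyMeasurable y μ := aestronglyMeasurable_of_tendsto_ae atTop hx hlim
  simpa using tendsto_integral_of_dominated_convergence (F := fun i t => ‖x i t - y t‖)
    (f := fun _ => 0) (fun _ => B) (fun i => ((hx i).sub hy).norm) (integrable_const B)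
    (fun i => (hB i).mono fun t ht => by simpa using ht)
    (hlim.mono fun t ht => by simpa using (ht.sub_const (y t)).norm)

end L1

end MeasureTheory

theorem add_mul_gronwallBound_zero (A K x : ℝ) :
    A + K * gronwallBound 0 K A x = A * Real.exp (K * x) := by
  rcases eq_or_ne K 0 with rfl | hK
  · simp
  · rw [gronwallBound_of_K_ne_0 hK]
    field_simp
    ring

theorem intervalIntegral_le_setIntegral_Icc {φ : ℝ → ℝ} {a b t : ℝ}
    (hφ : IntegrableOn φ (Icc a b)) (hφ0 : ∀ s, 0 ≤ φ s) (ht : t ∈ Icc a b) :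
    ∫ s in a..t, φ s ≤ ∫ s in Icc a b, φ s := by
  rw [intervalIntegral.integral_of_le ht.1]
  exact setIntegral_mono_set hφ (.of_forall hφ0)
    (Ioc_subset_Icc_self.trans (Icc_subset_Icc_right ht.2)).eventuallyLE

theorem norm_intervalIntegral_le_setIntegral_Icc {E : Type*} [NormedAddCommGroup E]
    [NormedSpace ℝ E] {f : ℝ → E} {a b t : ℝ} (hf : IntegrableOn f (Icc a b))
    (ht : t ∈ Icc a b) : ‖∫ s in a..t, f s‖ ≤ ∫ s in Icc a b, ‖f s‖ :=
  (intervalIntegral.norm_integral_le_integral_norm ht.1).trans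
    (intervalIntegral_le_setIntegral_Icc hf.norm (fun _ => norm_nonneg _) ht)

theorem continuousOn_primitive_Icc {E : Type*} [NormedAddCommGroup E] [NormedSpace ℝ E]
    {f : ℝ → E} {a b : ℝ} (hab : a ≤ b) (hf : IntegrableOn f (Icc a b)) :
    ContinuousOn (fun t => ∫ s in a..t, f s) (Icc a b) := by
  have := intervalIntegral.continuousOn_primitive_interval (μ := volume) (a := a) (b := b)
    (by rwa [uIcc_of_le hab])
  rwa [uIcc_of_le hab] at this

theorem hasDerivWithinAt_primitive_Ici {E : Type*} [NormedAddCommGroup E] [NormedSpace ℝ E]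
    [CompleteSpace E] {f : ℝ → E} {a b t : ℝ}
    (hf : ContinuousOn f (Icc a b)) (ht : t ∈ Ico a b) :
    HasDerivWithinAt (fun r => ∫ s in a..r, f s) (f t) (Ici t) t := by
  have hnhds : Icc a b ∈ 𝓝[>] t :=
    mem_nhdsWithin.2 ⟨Iio b, isOpen_Iio, ht.2, fun r hr => ⟨ht.1.trans hr.2.le, hr.1.le⟩⟩
  refine intervalIntegral.integral_hasDerivWithinAt_right (t := Ioi t) ?_
    ⟨Icc a b, hnhds, hf.aestronglyMeasurable measurableSet_Icc⟩
    ((hf.continuousWithinAt (Ico_subset_Icc_self ht)).mono_left (nhdsWithin_le_iff.2 hnhds))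
  exact (hf.mono (Icc_subset_Icc_right ht.2.le)).intervalIntegrable_of_Icc ht.1

theorem le_mul_exp_of_le_add_mul_integral {g : ℝ → ℝ} {a b A K : ℝ} (hK : 0 ≤ K)
    (hg : ContinuousOn g (Icc a b)) (h : ∀ t ∈ Icc a b, g t ≤ A + K * ∫ s in a..t, g s) :
    ∀ t ∈ Icc a b, g t ≤ A * Real.exp (K * (t - a)) := by
  intro t ht
  have hprim : ∀ r ∈ Icc a b, ∫ s in a..r, g s ≤ gronwallBound 0 K A (r - a) :=
    le_gronwallBound_of_liminf_deriv_right_le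
      (continuousOn_primitive_Icc (ht.1.trans ht.2) (hg.integrableOn_compact isCompact_Icc))
      (fun r hr _ hlt => (hasDerivWithinAt_primitive_Ici hg hr).liminf_right_slope_le hlt)
      (by simp) (fun r hr => by linarith [h r (Ico_subset_Icc_self hr)])
  calc g t ≤ A + K * ∫ s in a..t, g s := h t ht
    _ ≤ A + K * gronwallBound 0 K A (t - a) := by gcongr; exact hprim t ht
    _ = A * Real.exp (K * (t - a)) := add_mul_gronwallBound_zero A K (t - a)

theorem continuousOn_of_eq_add_intervalIntegral {E : Type*} [NormedAddCommGroup E]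
    [NormedSpace ℝ E] {a b : ℝ} {x g : ℝ → E} (hab : a ≤ b) (hg : IntegrableOn g (Icc a b))
    (hx : ∀ t ∈ Icc a b, x t = x a + ∫ s in a..t, g s) : ContinuousOn x (Icc a b) :=
  (continuousOn_const.add (continuousOn_primitive_Icc hab hg)).congr hx

theorem norm_sub_le_of_eq_add_intervalIntegral {E : Type*} [NormedAddCommGroup E]
    [NormedSpace ℝ E] {a b K : ℝ} {x y g h : ℝ → E} {φ : ℝ → ℝ} (hab : a ≤ b) (hK : 0 ≤ K)
    (hg : IntegrableOn g (Icc a b)) (hh : IntegrableOn h (Icc a b))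
    (hφ : IntegrableOn φ (Icc a b)) (hφ0 : ∀ s, 0 ≤ φ s)
    (hx : ∀ t ∈ Icc a b, x t = x a + ∫ s in a..t, g s)
    (hy : ∀ t ∈ Icc a b, y t = y a + ∫ s in a..t, h s)
    (hgh : ∀ᵐ s ∂(volume.restrict (Icc a b)), ‖g s - h s‖ ≤ K * ‖x s - y s‖ + φ s) :
    ∀ t ∈ Icc a b, ‖x t - y t‖ ≤ (‖x a - y a‖ + ∫ s in Icc a b, φ s) * Real.exp (K * (b - a)) := by
  have hd : ContinuousOn (fun s => ‖x s - y s‖) (Icc a b) :=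
    ((continuousOn_of_eq_add_intervalIntegral hab hg hx).sub
      (continuousOn_of_eq_add_intervalIntegral hab hh hy)).norm
  set A := ‖x a - y a‖ + ∫ s in Icc a b, φ s
  have hA : 0 ≤ A := add_nonneg (norm_nonneg _) (integral_nonneg hφ0)
  have hint : ∀ t ∈ Icc a b, ‖x t - y t‖ ≤ A + K * ∫ s in a..t, ‖x s - y s‖ := by
    intro t ht
    have hgt := hg.intervalIntegrable_of_mem_Icc ht
    have hht := hh.intervalIntegrable_of_mem_Icc ht
    have hdt := (hd.integrableOn_compact isCompact_Icc).intervalIntegrable_of_mem_Icc ht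
    have hφt := hφ.intervalIntegrable_of_mem_Icc ht
    calc ‖x t - y t‖ = ‖(x a - y a) + ∫ s in a..t, (g s - h s)‖ := by
          rw [hx t ht, hy t ht, intervalIntegral.integral_sub hgt hht]; abel_nf
      _ ≤ ‖x a - y a‖ + ∫ s in a..t, ‖g s - h s‖ :=
          (norm_add_le _ _).trans
            (by gcongr; exact intervalIntegral.norm_integral_le_integral_norm ht.1)
      _ ≤ ‖x a - y a‖ + ∫ s in a..t, (K * ‖x s - y s‖ + φ s) := by
          gcongr
          exact intervalIntegral.integral_mono_ae_restrict ht.1 (hgt.sub hht).norm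
            ((hdt.const_mul K).add hφt)
            (ae_restrict_of_ae_restrict_of_subset (Icc_subset_Icc_right ht.2) hgh)
      _ = ‖x a - y a‖ + (∫ s in a..t, φ s) + K * ∫ s in a..t, ‖x s - y s‖ := by
          have hsplit := intervalIntegral.integral_add (hdt.const_mul K) hφt
          rw [intervalIntegral.integral_const_mul] at hsplit
          rw [hsplit]
          ring
      _ ≤ A + K * ∫ s in a..t, ‖x s - y s‖ := by
          linarith [intervalIntegral_le_setIntegral_Icc hφ hφ0 ht]
  intro t ht
  calc ‖x t - y t‖ ≤ A * Real.exp (K * (t - a)) := le_mul_exp_of_le_add_mul_integral hK hd hint t ht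
    _ ≤ A * Real.exp (K * (b - a)) := by gcongr; exact ht.2

theorem tendsto_intervalIntegral_of_tendsto_setIntegral_norm_sub {E : Type*}
    [NormedAddCommGroup E] [NormedSpace ℝ E] {G : ℕ → ℝ → E} {g : ℝ → E} {a b t : ℝ}
    (hG : ∀ i, IntegrableOn (G i) (Icc a b)) (hg : IntegrableOn g (Icc a b))
    (hlim : Tendsto (fun i => ∫ s in Icc a b, ‖G i s - g s‖) atTop (𝓝 0)) (ht : t ∈ Icc a b) :
    Tendsto (fun i => ∫ s in a..t, G i s) atTop (𝓝 (∫ s in a..t, g s)) := by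
  rw [tendsto_iff_norm_sub_tendsto_zero]
  refine squeeze_zero (fun _ => norm_nonneg _) (fun i => ?_) hlim
  rw [← intervalIntegral.integral_sub ((hG i).intervalIntegrable_of_mem_Icc ht)
    (hg.intervalIntegrable_of_mem_Icc ht)]
  exact norm_intervalIntegral_le_setIntegral_Icc ((hG i).sub hg) ht

theorem cauchySeq_of_dist_le_mul {X : Type*} [PseudoMetricSpace X] {g : ℕ → X}
    {D : ℕ → ℕ → ℝ} {M : ℝ} (hM : 0 < M)
    (hD : ∀ δ : ℝ, 0 < δ → ∃ N, ∀ m ≥ N, ∀ m' ≥ N, D m m' < δ)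
    (hg : ∀ m m', dist (g m) (g m') ≤ M * D m m') : CauchySeq g := by
  refine Metric.cauchySeq_iff.2 fun δ hδ => ?_
  obtain ⟨N, hN⟩ := hD (δ / M) (div_pos hδ hM)
  exact ⟨N, fun m hm m' hm' => (hg m m').trans_lt ((lt_div_iff₀' hM).1 (hN m hm m' hm'))⟩

section ControlSystem

variable {n k : ℕ} {a b kx ku c ε : ℝ} {f : ℝ → Vec n → Vec k → Vec n} {U : ℝ → Set (Vec k)}
  {C : Set (Vec n × Vec n)} {xstar x x₁ x₂ : ℝ → Vec n} {u u₁ u₂ : ℝ → Vec k} {e e₁ e₂ : Vec n}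

theorem integral_norm_sub_nonneg (a b : ℝ) (u u₁ : ℝ → Vec k) :
    0 ≤ ∫ t in Icc a b, ‖u t - u₁ t‖ :=
  integral_nonneg fun _ => norm_nonneg _

theorem dV_nonneg : 0 ≤ dV a b x u e x₁ u₁ e₁ :=
  add_nonneg (add_nonneg (norm_nonneg _) (norm_nonneg _)) (integral_norm_sub_nonneg a b u u₁)

theorem dV_comm : dV a b x u e x₁ u₁ e₁ = dV a b x₁ u₁ e₁ x u e := by
  simp only [dV, norm_sub_rev]

theorem dV_triangle (hu : Integrable u (volume.restrict (Icc a b)))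
    (hu₁ : Integrable u₁ (volume.restrict (Icc a b)))
    (hu₂ : Integrable u₂ (volume.restrict (Icc a b))) :
    dV a b x u e x₂ u₂ e₂ ≤ dV a b x u e x₁ u₁ e₁ + dV a b x₁ u₁ e₁ x₂ u₂ e₂ := by
  have hcontrol : ∫ t in Icc a b, ‖u t - u₂ t‖ ≤
      (∫ t in Icc a b, ‖u t - u₁ t‖) + ∫ t in Icc a b, ‖u₁ t - u₂ t‖ := by
    refine (integral_mono (hu.sub hu₂).norm ((hu.sub hu₁).norm.add (hu₁.sub hu₂).norm)
      fun t => norm_sub_le_norm_sub_add_norm_sub _ _ _).trans_eq ?_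
    exact integral_add (hu.sub hu₁).norm (hu₁.sub hu₂).norm
  unfold dV
  linarith [norm_sub_le_norm_sub_add_norm_sub (x a) (x₁ a) (x₂ a),
    norm_sub_le_norm_sub_add_norm_sub e e₁ e₂]

theorem norm_initial_sub_le_dV : ‖x a - x₁ a‖ ≤ dV a b x u e x₁ u₁ e₁ := by
  unfold dV
  linarith [norm_nonneg (e - e₁), integral_norm_sub_nonneg a b u u₁]

theorem norm_endpoint_sub_le_dV : ‖e - e₁‖ ≤ dV a b x u e x₁ u₁ e₁ := by
  unfold dV
  linarith [norm_nonneg (x a - x₁ a), integral_norm_sub_nonneg a b u u₁]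

theorem integral_norm_control_sub_le_dV :
    ∫ t in Icc a b, ‖u t - u₁ t‖ ≤ dV a b x u e x₁ u₁ e₁ := by
  unfold dV
  linarith [norm_nonneg (x a - x₁ a), norm_nonneg (e - e₁)]

theorem tendsto_dV_zero {xseq : ℕ → ℝ → Vec n} {useq : ℕ → ℝ → Vec k} {eseq : ℕ → Vec n}
    (hx : Tendsto (fun i => xseq i a) atTop (𝓝 (x a))) (he : Tendsto eseq atTop (𝓝 e))
    (hu : Tendsto (fun i => ∫ t in Icc a b, ‖useq i t - u t‖) atTop (𝓝 0)) :
    Tendsto (fun i => dV a b (xseq i) (useq i) (eseq i) x u e) atTop (𝓝 0) := by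
  unfold dV
  simpa using ((hx.sub_const (x a)).norm.add (he.sub_const e).norm).add hu

theorem ae_norm_dynamics_sub_le
    (hflip : ∀ᵐ t ∂(volume.restrict (Icc a b)), ∀ x₁ x₂ : Vec n, ∀ u₁ ∈ U t, ∀ u₂ ∈ U t,
      ‖f t x₁ u₁ - f t x₂ u₂‖ ≤ kx * ‖x₁ - x₂‖ + ku * ‖u₁ - u₂‖)
    (hu : ∀ᵐ t ∂(volume.restrict (Icc a b)), u t ∈ U t)
    (hu₁ : ∀ᵐ t ∂(volume.restrict (Icc a b)), u₁ t ∈ U t) :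
    ∀ᵐ s ∂(volume.restrict (Icc a b)),
      ‖f s (x s) (u s) - f s (x₁ s) (u₁ s)‖ ≤ kx * ‖x s - x₁ s‖ + ku * ‖u s - u₁ s‖ := by
  filter_upwards [hflip, hu, hu₁] with s hs hus hu₁s
  exact hs _ _ _ hus _ hu₁s

namespace InV

theorem integrableOn_dynamics (h : InV a b f U C xstar ε x u e) :
    IntegrableOn (fun s => f s (x s) (u s)) (Icc a b) := by
  obtain ⟨-, -, ⟨x', hx', -, hdyn⟩, -, -⟩ := h
  exact hx'.congr hdyn

theorem eq_add_integral_dynamics (h : InV a b f U C xstar ε x u e) :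
    ∀ t ∈ Icc a b, x t = x a + ∫ s in a..t, f s (x s) (u s) := by
  obtain ⟨-, -, ⟨x', -, hrep, hdyn⟩, -, -⟩ := h
  intro t ht
  rw [hrep t ht]
  congr 1
  refine intervalIntegral.integral_congr_ae ?_
  filter_upwards [(ae_restrict_iff' measurableSet_Icc).1 hdyn] with s hs hst
  rw [uIoc_of_le ht.1] at hst
  exact hs ⟨hst.1.le, hst.2.trans ht.2⟩

theorem continuousOn (hab : a ≤ b) (h : InV a b f U C xstar ε x u e) :
    ContinuousOn x (Icc a b) :=
  continuousOn_of_eq_add_intervalIntegral hab h.integrableOn_dynamics h.eq_add_integral_dynamics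

theorem integrable_control (hbdd : ∀ᵐ t ∂(volume.restrict (Icc a b)), ∀ w ∈ U t, ‖w‖ ≤ c)
    (h : InV a b f U C xstar ε x u e) : Integrable u (volume.restrict (Icc a b)) :=
  (integrable_const c).mono' h.1 (h.2.1.mp (hbdd.mono fun _ hb hu => hb _ hu))

theorem norm_trajectory_sub_le (hab : a ≤ b) (hkx : 0 ≤ kx) (hku : 0 ≤ ku)
    (hflip : ∀ᵐ t ∂(volume.restrict (Icc a b)), ∀ x₁ x₂ : Vec n, ∀ u₁ ∈ U t, ∀ u₂ ∈ U t,
      ‖f t x₁ u₁ - f t x₂ u₂‖ ≤ kx * ‖x₁ - x₂‖ + ku * ‖u₁ - u₂‖)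
    (hbdd : ∀ᵐ t ∂(volume.restrict (Icc a b)), ∀ w ∈ U t, ‖w‖ ≤ c)
    (h : InV a b f U C xstar ε x u e)
    (h₁ : InV a b f U C xstar ε x₁ u₁ e₁) :
    ∀ t ∈ Icc a b, ‖x t - x₁ t‖ ≤
      (‖x a - x₁ a‖ + ku * ∫ s in Icc a b, ‖u s - u₁ s‖) * Real.exp (kx * (b - a)) := by
  have hcontrol := ((h.integrable_control hbdd).sub (h₁.integrable_control hbdd)).norm
  simpa only [Pi.sub_apply, integral_const_mul] using norm_sub_le_of_eq_add_intervalIntegral hab hkx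
    h.integrableOn_dynamics h₁.integrableOn_dynamics (hcontrol.const_mul ku)
    (fun s => mul_nonneg hku (norm_nonneg (u s - u₁ s))) h.eq_add_integral_dynamics
    h₁.eq_add_integral_dynamics (ae_norm_dynamics_sub_le hflip h.2.1 h₁.2.1)

theorem norm_trajectory_sub_le_mul_dV (hab : a ≤ b) (hkx : 0 ≤ kx) (hku : 0 ≤ ku)
    (hflip : ∀ᵐ t ∂(volume.restrict (Icc a b)), ∀ x₁ x₂ : Vec n, ∀ u₁ ∈ U t, ∀ u₂ ∈ U t,
      ‖f t x₁ u₁ - f t x₂ u₂‖ ≤ kx * ‖x₁ - x₂‖ + ku * ‖u₁ - u₂‖)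
    (hbdd : ∀ᵐ t ∂(volume.restrict (Icc a b)), ∀ w ∈ U t, ‖w‖ ≤ c)
    (h : InV a b f U C xstar ε x u e) (h₁ : InV a b f U C xstar ε x₁ u₁ e₁) :
    ∀ t ∈ Icc a b, ‖x t - x₁ t‖ ≤ (1 + ku) * Real.exp (kx * (b - a)) * dV a b x u e x₁ u₁ e₁ := by
  intro t ht
  have hinit : ‖x a - x₁ a‖ + ku * ∫ s in Icc a b, ‖u s - u₁ s‖ ≤
      (1 + ku) * dV a b x u e x₁ u₁ e₁ := by
    have hx : ‖x a - x₁ a‖ ≤ dV a b x u e x₁ u₁ e₁ := norm_initial_sub_le_dV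
    have hI : ∫ s in Icc a b, ‖u s - u₁ s‖ ≤ dV a b x u e x₁ u₁ e₁ :=
      integral_norm_control_sub_le_dV
    linarith [mul_le_mul_of_nonneg_left hI hku]
  calc ‖x t - x₁ t‖
      ≤ (‖x a - x₁ a‖ + ku * ∫ s in Icc a b, ‖u s - u₁ s‖) * Real.exp (kx * (b - a)) :=
        norm_trajectory_sub_le hab hkx hku hflip hbdd h h₁ t ht
    _ ≤ (1 + ku) * dV a b x u e x₁ u₁ e₁ * Real.exp (kx * (b - a)) := by gcongr
    _ = _ := by ring

theorem eq_of_dV_eq_zero (hab : a ≤ b) (hkx : 0 ≤ kx) (hku : 0 ≤ ku)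
    (hflip : ∀ᵐ t ∂(volume.restrict (Icc a b)), ∀ x₁ x₂ : Vec n, ∀ u₁ ∈ U t, ∀ u₂ ∈ U t,
      ‖f t x₁ u₁ - f t x₂ u₂‖ ≤ kx * ‖x₁ - x₂‖ + ku * ‖u₁ - u₂‖)
    (hbdd : ∀ᵐ t ∂(volume.restrict (Icc a b)), ∀ w ∈ U t, ‖w‖ ≤ c)
    (h : InV a b f U C xstar ε x u e) (h₁ : InV a b f U C xstar ε x₁ u₁ e₁)
    (hd : dV a b x u e x₁ u₁ e₁ = 0) :
    (∀ t ∈ Icc a b, x t = x₁ t) ∧ e = e₁ ∧ u =ᵐ[volume.restrict (Icc a b)] u₁ := by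
  have hcontrol : ∫ t in Icc a b, ‖u t - u₁ t‖ = 0 :=
    le_antisymm (hd ▸ integral_norm_control_sub_le_dV) (integral_norm_sub_nonneg a b u u₁)
  refine ⟨fun t ht => ?_, ?_, ?_⟩
  · have := h.norm_trajectory_sub_le_mul_dV hab hkx hku hflip hbdd h₁ t ht
    rw [hd, mul_zero] at this
    exact sub_eq_zero.1 (norm_le_zero_iff.1 this)
  · exact sub_eq_zero.1 (norm_le_zero_iff.1 (hd ▸ norm_endpoint_sub_le_dV))
  · have hint := ((h.integrable_control hbdd).sub (h₁.integrable_control hbdd)).norm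
    filter_upwards [(integral_eq_zero_iff_of_nonneg (fun _ => norm_nonneg _) hint).1 hcontrol]
      with t ht
    exact sub_eq_zero.1 (norm_eq_zero.1 ht)

end InV

end ControlSystem

section Completeness

variable {n k : ℕ} {a b kx ku c ε : ℝ} {f : ℝ → Vec n → Vec k → Vec n} {U : ℝ → Set (Vec k)}
  {C : Set (Vec n × Vec n)} {xstar x : ℝ → Vec n} {u : ℝ → Vec k} {e : Vec n}
  {xseq : ℕ → ℝ → Vec n} {useq : ℕ → ℝ → Vec k} {eseq : ℕ → Vec n}

theorem tendsto_integral_norm_dynamics_sub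
    (hfmeas : Measurable fun q : ℝ × Vec n × Vec k => f q.1 q.2.1 q.2.2)
    (hflip : ∀ᵐ t ∂(volume.restrict (Icc a b)), ∀ x₁ x₂ : Vec n, ∀ u₁ ∈ U t, ∀ u₂ ∈ U t,
      ‖f t x₁ u₁ - f t x₂ u₂‖ ≤ kx * ‖x₁ - x₂‖ + ku * ‖u₁ - u₂‖)
    (hG : ∀ i, IntegrableOn (fun s => f s (xseq i s) (useq i s)) (Icc a b))
    (hmem : ∀ i, ∀ᵐ t ∂(volume.restrict (Icc a b)), useq i t ∈ U t)
    (humem : ∀ᵐ t ∂(volume.restrict (Icc a b)), u t ∈ U t)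
    (hx : AEStronglyMeasurable x (volume.restrict (Icc a b)))
    (hxint : ∀ i, Integrable (fun s => ‖xseq i s - x s‖) (volume.restrict (Icc a b)))
    (huint : ∀ i, Integrable (fun s => ‖useq i s - u s‖) (volume.restrict (Icc a b)))
    (hu : AEStronglyMeasurable u (volume.restrict (Icc a b)))
    (hlimx : Tendsto (fun i => ∫ s in Icc a b, ‖xseq i s - x s‖) atTop (𝓝 0))
    (hlimu : Tendsto (fun i => ∫ s in Icc a b, ‖useq i s - u s‖) atTop (𝓝 0)) :
    IntegrableOn (fun s => f s (x s) (u s)) (Icc a b) ∧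
      Tendsto (fun i => ∫ s in Icc a b, ‖f s (xseq i s) (useq i s) - f s (x s) (u s)‖)
        atTop (𝓝 0) := by
  have hbound : ∀ i, Integrable (fun s => kx * ‖xseq i s - x s‖ + ku * ‖useq i s - u s‖)
      (volume.restrict (Icc a b)) := fun i => ((hxint i).const_mul kx).add ((huint i).const_mul ku)
  have hlip := fun i => ae_norm_dynamics_sub_le (x := xseq i) (x₁ := x) hflip (hmem i) humem
  have hmeas : AEStronglyMeasurable (fun s => f s (x s) (u s)) (volume.restrict (Icc a b)) :=
    (hfmeas.comp_aemeasurable (aemeasurable_id.prodMk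
      (hx.aemeasurable.prodMk hu.aemeasurable))).aestronglyMeasurable
  refine ⟨Integrable.of_norm_sub_le (hG 0) hmeas (hbound 0)
    ((hlip 0).mono fun s hs => (norm_sub_rev _ _).trans_le hs), ?_⟩
  have hsum : Tendsto (fun i => kx * (∫ s in Icc a b, ‖xseq i s - x s‖) +
      ku * ∫ s in Icc a b, ‖useq i s - u s‖) atTop (𝓝 0) := by
    simpa using (hlimx.const_mul kx).add (hlimu.const_mul ku)
  refine squeeze_zero (fun _ => integral_nonneg fun _ => norm_nonneg _) (fun i => ?_) hsum
  calc ∫ s in Icc a b, ‖f s (xseq i s) (useq i s) - f s (x s) (u s)‖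
      ≤ ∫ s in Icc a b, (kx * ‖xseq i s - x s‖ + ku * ‖useq i s - u s‖) :=
        integral_mono_of_nonneg (.of_forall fun _ => norm_nonneg _) (hbound i) (hlip i)
    _ = _ := by
        rw [integral_add ((hxint i).const_mul kx) ((huint i).const_mul ku), integral_const_mul,
          integral_const_mul]

theorem InV.of_tendsto (hab : a ≤ b)
    (hfmeas : Measurable fun q : ℝ × Vec n × Vec k => f q.1 q.2.1 q.2.2)
    (hflip : ∀ᵐ t ∂(volume.restrict (Icc a b)), ∀ x₁ x₂ : Vec n, ∀ u₁ ∈ U t, ∀ u₂ ∈ U t,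
      ‖f t x₁ u₁ - f t x₂ u₂‖ ≤ kx * ‖x₁ - x₂‖ + ku * ‖u₁ - u₂‖)
    (hbdd : ∀ᵐ t ∂(volume.restrict (Icc a b)), ∀ w ∈ U t, ‖w‖ ≤ c)
    (hUclosed : ∀ t, IsClosed (U t)) (hC : IsClosed C)
    (hin : ∀ i, InV a b f U C xstar ε (xseq i) (useq i) (eseq i))
    (hu : Integrable u (volume.restrict (Icc a b)))
    (hlimu : Tendsto (fun i => ∫ t in Icc a b, ‖useq i t - u t‖) atTop (𝓝 0))
    (hlimx : ∀ t ∈ Icc a b, Tendsto (fun i => xseq i t) atTop (𝓝 (x t)))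
    (hlime : Tendsto eseq atTop (𝓝 e)) :
    InV a b f U C xstar ε x u e := by
  have hui : ∀ i, Integrable (useq i) (volume.restrict (Icc a b)) :=
    fun i => (hin i).integrable_control hbdd
  have humem : ∀ᵐ t ∂(volume.restrict (Icc a b)), u t ∈ U t :=
    ae_mem_of_tendsto_integral_norm_sub hUclosed hui hu (fun i => (hin i).2.1) hlimu
  have htube : ∀ t ∈ Icc a b, ‖x t - xstar t‖ ≤ ε := fun t ht =>
    le_of_tendsto ((hlimx t ht).sub_const _).norm (.of_forall fun i => (hin i).2.2.2.2 t ht)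
  -- the tube around `xstar` supplies the dominating constant `2 * ε`
  have hclose : ∀ i, ∀ t ∈ Icc a b, ‖xseq i t - x t‖ ≤ 2 * ε := fun i t ht => by
    linarith [norm_sub_le_norm_sub_add_norm_sub (xseq i t) (xstar t) (x t),
      norm_sub_rev (xstar t) (x t), (hin i).2.2.2.2 t ht, htube t ht]
  have hclose_ae : ∀ i, ∀ᵐ t ∂(volume.restrict (Icc a b)), ‖xseq i t - x t‖ ≤ 2 * ε :=
    fun i => (ae_restrict_iff' measurableSet_Icc).2 (.of_forall (hclose i))
  have hlimx_ae := (ae_restrict_iff' (μ := volume) measurableSet_Icc).2 (.of_forall hlimx)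
  have hxi : ∀ i, AEStronglyMeasurable (xseq i) (volume.restrict (Icc a b)) :=
    fun i => ((hin i).continuousOn hab).aestronglyMeasurable measurableSet_Icc
  have hx : AEStronglyMeasurable x (volume.restrict (Icc a b)) :=
    aestronglyMeasurable_of_tendsto_ae atTop hxi hlimx_ae
  obtain ⟨hdyn, hlimdyn⟩ := tendsto_integral_norm_dynamics_sub hfmeas hflip
    (fun i => (hin i).integrableOn_dynamics) (fun i => (hin i).2.1) humem hx
    (fun i => .of_bound ((hxi i).sub hx).norm (2 * ε)
      ((hclose_ae i).mono fun t ht => by rwa [norm_norm]))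
    (fun i => ((hui i).sub hu).norm) hu.aestronglyMeasurable
    (tendsto_integral_norm_sub_of_tendsto_of_bound hxi hclose_ae hlimx_ae) hlimu
  have hrep : ∀ t ∈ Icc a b, x t = x a + ∫ s in a..t, f s (x s) (u s) := fun t ht =>
    tendsto_nhds_unique (hlimx t ht) <|
      ((hlimx a ⟨le_rfl, hab⟩).add (tendsto_intervalIntegral_of_tendsto_setIntegral_norm_sub
        (fun i => (hin i).integrableOn_dynamics) hdyn hlimdyn ht)).congr
        fun i => ((hin i).eq_add_integral_dynamics t ht).symm
  exact ⟨hu.aestronglyMeasurable, humem, ⟨_, hdyn, hrep, .of_forall fun _ => rfl⟩,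
    hC.mem_of_tendsto ((hlimx a ⟨le_rfl, hab⟩).prodMk_nhds hlime)
      (.of_forall fun i => (hin i).2.2.2.1), htube⟩

theorem InV.exists_tendsto_dV_of_cauchy (hab : a ≤ b) (hkx : 0 ≤ kx) (hku : 0 ≤ ku)
    (hfmeas : Measurable fun q : ℝ × Vec n × Vec k => f q.1 q.2.1 q.2.2)
    (hflip : ∀ᵐ t ∂(volume.restrict (Icc a b)), ∀ x₁ x₂ : Vec n, ∀ u₁ ∈ U t, ∀ u₂ ∈ U t,
      ‖f t x₁ u₁ - f t x₂ u₂‖ ≤ kx * ‖x₁ - x₂‖ + ku * ‖u₁ - u₂‖)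
    (hbdd : ∀ᵐ t ∂(volume.restrict (Icc a b)), ∀ w ∈ U t, ‖w‖ ≤ c)
    (hUclosed : ∀ t, IsClosed (U t)) (hC : IsClosed C)
    (hin : ∀ i, InV a b f U C xstar ε (xseq i) (useq i) (eseq i))
    (hcauchy : ∀ δ : ℝ, 0 < δ → ∃ N, ∀ m ≥ N, ∀ m' ≥ N,
      dV a b (xseq m) (useq m) (eseq m) (xseq m') (useq m') (eseq m') < δ) :
    ∃ x u e, InV a b f U C xstar ε x u e ∧
      Tendsto (fun i => dV a b (xseq i) (useq i) (eseq i) x u e) atTop (𝓝 0) := by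
  have hui := fun i => (hin i).integrable_control hbdd
  obtain ⟨u, hu, hlimu⟩ := exists_integrable_tendsto_integral_norm_sub hui
    (cauchySeq_of_dist_le_mul one_pos hcauchy fun m m' => by
      rw [one_mul, Integrable.dist_toL1]
      exact integral_norm_control_sub_le_dV)
  obtain ⟨e, hlime⟩ := cauchySeq_tendsto_of_complete
    (cauchySeq_of_dist_le_mul (g := eseq) one_pos hcauchy fun m m' => by
      rw [one_mul, dist_eq_norm]
      exact norm_endpoint_sub_le_dV)
  have hxcau : ∀ t ∈ Icc a b, CauchySeq fun i => xseq i t := fun t ht =>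
    cauchySeq_of_dist_le_mul (by positivity) hcauchy fun m m' => (dist_eq_norm _ _).trans_le
      ((hin m).norm_trajectory_sub_le_mul_dV hab hkx hku hflip hbdd (hin m') t ht)
  set x : ℝ → Vec n := fun t => limUnder atTop fun i => xseq i t
  have hlimx : ∀ t ∈ Icc a b, Tendsto (fun i => xseq i t) atTop (𝓝 (x t)) :=
    fun t ht => (hxcau t ht).tendsto_limUnder
  exact ⟨x, u, e, InV.of_tendsto hab hfmeas hflip hbdd hUclosed hC hin hu hlimu hlimx hlime,
    tendsto_dV_zero (hlimx a ⟨le_rfl, hab⟩) hlime hlimu⟩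

end Completeness

theorem dV_complete_metric_space_general
    {n k : ℕ} (a b : ℝ) (hab : a < b)
    (f : ℝ → Vec n → Vec k → Vec n) (U : ℝ → Set (Vec k))
    (kx ku : ℝ) (hkx : 0 ≤ kx) (hku : 0 ≤ ku)
    (hfmeas : Measurable fun q : ℝ × Vec n × Vec k => f q.1 q.2.1 q.2.2)
    (hflip : ∀ᵐ t ∂(volume.restrict (Icc a b)), ∀ x₁ x₂ : Vec n, ∀ u₁ ∈ U t, ∀ u₂ ∈ U t,
      ‖f t x₁ u₁ - f t x₂ u₂‖ ≤ kx * ‖x₁ - x₂‖ + ku * ‖u₁ - u₂‖)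
    (hUclosed : ∀ t, IsClosed (U t))
    (c : ℝ)
    (hbdd : ∀ᵐ t ∂(volume.restrict (Icc a b)), ∀ w ∈ U t, ‖w‖ ≤ c)
    (C : Set (Vec n × Vec n)) (hC : IsClosed C)
    (xstar : ℝ → Vec n) (ε : ℝ) :
    -- nonnegativity
    (∀ x u e x₁ u₁ e₁, InV a b f U C xstar ε x u e → InV a b f U C xstar ε x₁ u₁ e₁ →
      0 ≤ dV a b x u e x₁ u₁ e₁) ∧
    -- symmetry
    (∀ x u e x₁ u₁ e₁, InV a b f U C xstar ε x u e → InV a b f U C xstar ε x₁ u₁ e₁ →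
      dV a b x u e x₁ u₁ e₁ = dV a b x₁ u₁ e₁ x u e) ∧
    -- triangle inequality
    (∀ x u e x₁ u₁ e₁ x₂ u₂ e₂,
      InV a b f U C xstar ε x u e → InV a b f U C xstar ε x₁ u₁ e₁ →
      InV a b f U C xstar ε x₂ u₂ e₂ →
      dV a b x u e x₂ u₂ e₂ ≤ dV a b x u e x₁ u₁ e₁ + dV a b x₁ u₁ e₁ x₂ u₂ e₂) ∧
    -- separation, modulo identification of controls equal a.e.
    (∀ x u e x₁ u₁ e₁, InV a b f U C xstar ε x u e → InV a b f U C xstar ε x₁ u₁ e₁ →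
      dV a b x u e x₁ u₁ e₁ = 0 →
      (∀ t ∈ Icc a b, x t = x₁ t) ∧ e = e₁ ∧
        u =ᵐ[volume.restrict (Icc a b)] u₁) ∧
    -- completeness
    (∀ (xseq : ℕ → ℝ → Vec n) (useq : ℕ → ℝ → Vec k) (eseq : ℕ → Vec n),
      (∀ i, InV a b f U C xstar ε (xseq i) (useq i) (eseq i)) →
      (∀ δ : ℝ, 0 < δ → ∃ N, ∀ m ≥ N, ∀ m' ≥ N,
        dV a b (xseq m) (useq m) (eseq m) (xseq m') (useq m') (eseq m') < δ) →
      ∃ x u e, InV a b f U C xstar ε x u e ∧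
        Tendsto (fun i => dV a b (xseq i) (useq i) (eseq i) x u e) atTop (nhds 0)) := by
  refine ⟨fun _ _ _ _ _ _ _ _ => dV_nonneg, fun _ _ _ _ _ _ _ _ => dV_comm,
    fun _ _ _ _ _ _ _ _ _ h h₁ h₂ => dV_triangle (h.integrable_control hbdd)
      (h₁.integrable_control hbdd) (h₂.integrable_control hbdd),
    fun _ _ _ _ _ _ h h₁ hd => h.eq_of_dV_eq_zero hab.le hkx hku hflip hbdd h₁ hd,
    fun _ _ _ hin hcauchy => InV.exists_tendsto_dV_of_cauchy hab.le hkx hku hfmeas hflip hbdd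
      hUclosed hC hin hcauchy⟩

/-- `d_V` is a metric on `V` — nonnegative, symmetric, satisfying the
triangle inequality, and separating points up to identification of controls equal a.e.
(and of the trajectories they determine on `[a,b]`) — and `(V, d_V)` is a complete metric
space: every `d_V`-Cauchy sequence in `V` converges in `d_V` to an element of `V`. -/
theorem dV_complete_metric_space
    {n k : ℕ} (a b : ℝ) (hab : a < b)
    (f : ℝ → Vec n → Vec k → Vec n) (U : ℝ → Set (Vec k))
    (kx ku : ℝ) (hkx : 0 ≤ kx) (hku : 0 ≤ ku)
    (hfmeas : Measurable fun q : ℝ × Vec n × Vec k => f q.1 q.2.1 q.2.2)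
    (hflip : ∀ᵐ t ∂(volume.restrict (Icc a b)), ∀ x₁ x₂ : Vec n, ∀ u₁ ∈ U t, ∀ u₂ ∈ U t,
      ‖f t x₁ u₁ - f t x₂ u₂‖ ≤ kx * ‖x₁ - x₂‖ + ku * ‖u₁ - u₂‖)
    (hgraph : MeasurableSet {q : ℝ × Vec k | q.1 ∈ Icc a b ∧ q.2 ∈ U q.1})
    (hUclosed : ∀ t, IsClosed (U t))
    (c : ℝ) (hc : 0 < c)
    (hbdd : ∀ᵐ t ∂(volume.restrict (Icc a b)), ∀ w ∈ U t, ‖w‖ ≤ c)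
    (C : Set (Vec n × Vec n)) (hC : IsClosed C)
    (xstar : ℝ → Vec n) (hxstar : Continuous xstar) (ε : ℝ) (hε : 0 < ε) :
    -- nonnegativity
    (∀ x u e x₁ u₁ e₁, InV a b f U C xstar ε x u e → InV a b f U C xstar ε x₁ u₁ e₁ →
      0 ≤ dV a b x u e x₁ u₁ e₁) ∧
    -- symmetry
    (∀ x u e x₁ u₁ e₁, InV a b f U C xstar ε x u e → InV a b f U C xstar ε x₁ u₁ e₁ →
      dV a b x u e x₁ u₁ e₁ = dV a b x₁ u₁ e₁ x u e) ∧
    -- triangle inequality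
    (∀ x u e x₁ u₁ e₁ x₂ u₂ e₂,
      InV a b f U C xstar ε x u e → InV a b f U C xstar ε x₁ u₁ e₁ →
      InV a b f U C xstar ε x₂ u₂ e₂ →
      dV a b x u e x₂ u₂ e₂ ≤ dV a b x u e x₁ u₁ e₁ + dV a b x₁ u₁ e₁ x₂ u₂ e₂) ∧
    -- separation, modulo identification of controls equal a.e.
    (∀ x u e x₁ u₁ e₁, InV a b f U C xstar ε x u e → InV a b f U C xstar ε x₁ u₁ e₁ →
      dV a b x u e x₁ u₁ e₁ = 0 →
      (∀ t ∈ Icc a b, x t = x₁ t) ∧ e = e₁ ∧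
        u =ᵐ[volume.restrict (Icc a b)] u₁) ∧
    -- completeness
    (∀ (xseq : ℕ → ℝ → Vec n) (useq : ℕ → ℝ → Vec k) (eseq : ℕ → Vec n),
      (∀ i, InV a b f U C xstar ε (xseq i) (useq i) (eseq i)) →
      (∀ δ : ℝ, 0 < δ → ∃ N, ∀ m ≥ N, ∀ m' ≥ N,
        dV a b (xseq m) (useq m) (eseq m) (xseq m') (useq m') (eseq m') < δ) →
      ∃ x u e, InV a b f U C xstar ε x u e ∧
        Tendsto (fun i => dV a b (xseq i) (useq i) (eseq i) x u e) atTop (nhds 0)) :=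
  dV_complete_metric_space_general a b hab f U kx ku hkx hku hfmeas hflip hUclosed c hbdd C hC xstar
    ε
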